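/- If G is a finite non-cyclic simple group, then the order superpower graph S(G) is not minimally edge connected. -/

import Mathlib

/-- The degree of a vertex: the number of its neighbours. -/
noncomputable def gDeg {V : Type*} (G : SimpleGraph V) (v : V) : ℕ :=
  (G.neighborSet v).ncard

/-- The minimum degree of a graph. -/
noncomputable def minDeg {V : Type*} (G : SimpleGraph V) : ℕ :=
  sInf (Set.range (gDeg G))

/-- The edge connectivity: the minimum size of a set of edges whose removal
disconnects the graph. -/
noncomputable def edgeConn {V : Type*} (G : SimpleGraph V) : ℕ :=
  sInf {n : ℕ | ∃ S : Set (Sym2 V), S ⊆ G.edgeSet ∧ S.ncard = n ∧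
    ¬ (G.deleteEdges S).Connected}

/-- The vertex connectivity: the minimum size of a set of vertices whose removal
disconnects the graph or leaves a single vertex. -/
noncomputable def vertexConn {V : Type*} (G : SimpleGraph V) : ℕ :=
  sInf {n : ℕ | ∃ S : Set V, S.ncard = n ∧ Sᶜ.Nonempty ∧
    (¬ (G.induce Sᶜ).Preconnected ∨ Sᶜ.ncard = 1)}

/-- A graph is minimally edge connected if deleting any edge decreases the
edge connectivity by one. -/
def MinEdgeConnected {V : Type*} (G : SimpleGraph V) : Prop :=
  ∀ e ∈ G.edgeSet, edgeConn (G.deleteEdges {e}) = edgeConn G - 1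

/-- A graph is minimally connected if deleting any edge decreases the
vertex connectivity by one. -/
def MinConnected {V : Type*} (G : SimpleGraph V) : Prop :=
  ∀ e ∈ G.edgeSet, vertexConn (G.deleteEdges {e}) = vertexConn G - 1

/-- The power graph of a group: distinct `x, y` are adjacent iff one is a
natural power of the other. -/
def powerGraph (G : Type*) [Group G] : SimpleGraph G :=
  SimpleGraph.fromRel (fun x y => ∃ m : ℕ, y = x ^ m)

/-- The enhanced power graph of a group: distinct `x, y` are adjacent iff they
lie in a common cyclic subgroup. -/
def enhancedPowerGraph (G : Type*) [Group G] : SimpleGraph G :=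
  SimpleGraph.fromRel
    (fun x y => ∃ z : G, x ∈ Subgroup.zpowers z ∧ y ∈ Subgroup.zpowers z)

/-- The order superpower graph of a group: distinct `x, y` are adjacent iff the
order of one divides the order of the other. -/
def superpowerGraph (G : Type*) [Group G] : SimpleGraph G :=
  SimpleGraph.fromRel (fun x y => orderOf x ∣ orderOf y)

/-!
The identity of `G` is adjacent to every other vertex of `S(G)`. In a graph with such a universal
vertex `u`, a cut separating `u` from a vertex `x` has at least `deg x` edges: each neighbour of
`x` on the side of `u` is joined to `x` across the cut, each neighbour on the other side to `u`.
Hence if `deg y` exceeds the minimum degree `δ`, which bounds the edge connectivity `λ`, deleting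
the edge `uy` cannot lower `λ`: a disconnecting set of `λ - 1` edges of `S(G) - uy`, together with
`uy`, would contain a cut of `S(G)` which either separates `u` from `y`, and then has more than
`δ ≥ λ` edges, or lies inside the `λ - 1` edges.

Such a `y` exists. Otherwise every non-identity element has degree `δ`. As `G` is not a `p`-group,
`|G|` has two prime divisors `p ≠ q`. An element of order `p` has degree `#{h | p ∣ o(h)}`, and an
element `g` with `q ∣ o(g)` and `o(g)` maximal for divisibility has degree
`#{h | h ^ o(g) = 1} - 1`. By Frobenius' theorem modulo `q` (`q ∣ #{h | h ^ m = 1}` when `q ∣ m`,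
applied to `m = o(g)` and to the `p'`-part of `|G|`), `q` divides both `δ` and `δ + 1`.
-/

namespace SimpleGraph

variable {V : Type*} (H : SimpleGraph V)

def edgeBoundary (A : Set V) : Set (Sym2 V) :=
  {e | ∃ a b, H.Adj a b ∧ a ∈ A ∧ b ∉ A ∧ e = s(a, b)}

variable {H}

lemma edgeBoundary_subset_edgeSet (A : Set V) : H.edgeBoundary A ⊆ H.edgeSet := by
  rintro e ⟨a, b, hab, -, -, rfl⟩
  exact hab

lemma mk_mem_edgeBoundary_iff {A : Set V} {a b : V} :
    s(a, b) ∈ H.edgeBoundary A ↔ H.Adj a b ∧ (a ∈ A ↔ b ∉ A) := by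
  constructor
  · rintro ⟨c, d, hcd, hc, hd, he⟩
    rcases Sym2.eq_iff.mp he with ⟨rfl, rfl⟩ | ⟨rfl, rfl⟩
    · exact ⟨hcd, by tauto⟩
    · exact ⟨hcd.symm, by tauto⟩
  · rintro ⟨hab, hA⟩
    by_cases ha : a ∈ A
    · exact ⟨a, b, hab, ha, hA.mp ha, rfl⟩
    · exact ⟨b, a, hab.symm, not_not.mp (mt hA.mpr ha), ha, Sym2.eq_swap⟩

lemma edgeBoundary_compl (A : Set V) : H.edgeBoundary Aᶜ = H.edgeBoundary A := by
  ext e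
  induction e using Sym2.ind with
  | h a b => simp only [mk_mem_edgeBoundary_iff, Set.mem_compl_iff, not_not]; tauto

lemma not_connected_deleteEdges_of_edgeBoundary_subset {A : Set V} {S : Set (Sym2 V)}
    (hA : A.Nonempty) (hAc : Aᶜ.Nonempty) (hS : H.edgeBoundary A ⊆ S) :
    ¬ (H.deleteEdges S).Connected := by
  obtain ⟨u, hu⟩ := hA
  obtain ⟨v, hv⟩ := hAc
  intro hconn
  obtain ⟨w⟩ := hconn.preconnected u v
  obtain ⟨d, -, hd, hd'⟩ := w.exists_boundary_dart A hu hv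
  have hadj := deleteEdges_adj.mp d.adj
  exact hadj.2 (hS ⟨_, _, hadj.1, hd, hd', rfl⟩)

lemma exists_edgeBoundary_subset_of_not_connected [Nonempty V] {S : Set (Sym2 V)}
    (h : ¬ (H.deleteEdges S).Connected) :
    ∃ A : Set V, A.Nonempty ∧ Aᶜ.Nonempty ∧ H.edgeBoundary A ⊆ S := by
  obtain ⟨u, v, huv⟩ : ∃ u v, ¬ (H.deleteEdges S).Reachable u v := by
    by_contra! hr
    exact h ⟨hr⟩
  refine ⟨{w | (H.deleteEdges S).Reachable u w}, ⟨u, .rfl⟩, ⟨v, huv⟩, ?_⟩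
  rintro e ⟨a, b, hab, ha, hb, rfl⟩
  by_contra he
  exact hb (ha.trans (deleteEdges_adj.mpr ⟨hab, he⟩).reachable)

lemma edgeConn_le_ncard_edgeBoundary {A : Set V} (hA : A.Nonempty) (hAc : Aᶜ.Nonempty) :
    edgeConn H ≤ (H.edgeBoundary A).ncard :=
  Nat.sInf_le ⟨_, edgeBoundary_subset_edgeSet A, rfl,
    not_connected_deleteEdges_of_edgeBoundary_subset hA hAc subset_rfl⟩

lemma exists_disconnecting_ncard_eq_edgeConn [Nontrivial V] :
    ∃ S ⊆ H.edgeSet, S.ncard = edgeConn H ∧ ¬ (H.deleteEdges S).Connected := by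
  obtain ⟨v⟩ : Nonempty V := inferInstance
  have hne : {n | ∃ S ⊆ H.edgeSet, S.ncard = n ∧ ¬ (H.deleteEdges S).Connected}.Nonempty :=
    ⟨_, H.edgeBoundary {v}, edgeBoundary_subset_edgeSet {v}, rfl,
      not_connected_deleteEdges_of_edgeBoundary_subset (Set.singleton_nonempty v)
        (Set.nonempty_compl_of_nontrivial v) subset_rfl⟩
  exact Nat.sInf_mem hne

lemma connected_of_forall_adj {u : V} (hu : ∀ v ≠ u, H.Adj u v) : H.Connected := by
  have hr (v : V) : H.Reachable u v := by
    rcases eq_or_ne v u with rfl | hv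
    exacts [.rfl, (hu v hv).reachable]
  exact (connected_iff H).mpr ⟨fun v w => (hr v).symm.trans (hr w), ⟨u⟩⟩

variable [Finite V]

lemma edgeConn_le_gDeg [Nontrivial V] (v : V) : edgeConn H ≤ gDeg H v := by
  have hsub : H.edgeBoundary {v} ⊆ (fun w => s(v, w)) '' H.neighborSet v := by
    rintro e ⟨a, b, hab, rfl, -, rfl⟩
    exact ⟨b, hab, rfl⟩
  calc edgeConn H ≤ (H.edgeBoundary {v}).ncard :=
        edgeConn_le_ncard_edgeBoundary (Set.singleton_nonempty v)
          (Set.nonempty_compl_of_nontrivial v)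
    _ ≤ ((fun w => s(v, w)) '' H.neighborSet v).ncard := Set.ncard_le_ncard hsub
    _ ≤ gDeg H v := Set.ncard_image_le (Set.toFinite _)

lemma edgeConn_le_minDeg [Nontrivial V] : edgeConn H ≤ minDeg H := by
  obtain ⟨v, hv⟩ := Nat.sInf_mem (Set.range_nonempty (gDeg H))
  exact (edgeConn_le_gDeg v).trans_eq hv

lemma Connected.one_le_edgeConn [Nontrivial V] (hH : H.Connected) : 1 ≤ edgeConn H := by
  obtain ⟨S, -, hS, hdisc⟩ := exists_disconnecting_ncard_eq_edgeConn (H := H)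
  by_contra! h0
  rw [Nat.lt_one_iff.mp h0, Set.ncard_eq_zero] at hS
  rw [hS, deleteEdges_empty] at hdisc
  exact hdisc hH

lemma gDeg_le_ncard_edgeBoundary_of_forall_adj {u x : V} (hu : ∀ v ≠ u, H.Adj u v)
    {A : Set V} (hux : u ∈ A ↔ x ∉ A) : gDeg H x ≤ (H.edgeBoundary A).ncard := by
  wlog huA : u ∈ A generalizing A
  · rw [← edgeBoundary_compl]
    exact this (by simp only [Set.mem_compl_iff]; tauto) huA
  have hxA : x ∉ A := hux.mp huA
  classical
  refine Set.ncard_le_ncard_of_injOn (fun w => if w ∈ A then s(x, w) else s(u, w)) ?_ ?_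
  · intro w hw
    rw [mem_neighborSet] at hw
    split_ifs with hwA
    · exact mk_mem_edgeBoundary_iff.mpr ⟨hw, by tauto⟩
    · exact mk_mem_edgeBoundary_iff.mpr ⟨hu w (by rintro rfl; exact hwA huA), by tauto⟩
  · intro w hw w' hw' h
    rw [mem_neighborSet] at hw hw'
    dsimp only at h
    split_ifs at h with hwA hw'A hw'A
    · exact Sym2.congr_right.mp h
    · rcases Sym2.eq_iff.mp h with ⟨rfl, -⟩ | ⟨hxw', -⟩
      exacts [absurd huA hxA, absurd hxw' hw'.ne]
    · rcases Sym2.eq_iff.mp h with ⟨rfl, -⟩ | ⟨-, hwx⟩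
      exacts [absurd huA hxA, absurd hwx.symm hw.ne]
    · exact Sym2.congr_right.mp h

theorem not_minEdgeConnected_of_forall_adj {u y : V} (hu : ∀ v ≠ u, H.Adj u v) (hyu : y ≠ u)
    (hy : minDeg H < gDeg H y) : ¬ MinEdgeConnected H := by
  intro hmin
  have : Nontrivial V := ⟨y, u, hyu⟩
  have hpos := (connected_of_forall_adj hu).one_le_edgeConn
  have hle : edgeConn H ≤ minDeg H := edgeConn_le_minDeg
  obtain ⟨S, -, hS, hdisc⟩ := exists_disconnecting_ncard_eq_edgeConn (H := H.deleteEdges {s(u, y)})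
  rw [hmin _ (hu y hyu)] at hS
  rw [deleteEdges_deleteEdges] at hdisc
  obtain ⟨A, hA, hAc, hAS⟩ := exists_edgeBoundary_subset_of_not_connected hdisc
  by_cases huy : s(u, y) ∈ H.edgeBoundary A
  · have hdeg := gDeg_le_ncard_edgeBoundary_of_forall_adj hu (mk_mem_edgeBoundary_iff.mp huy).2
    have hcut : (H.edgeBoundary A).ncard ≤ 1 + S.ncard :=
      (Set.ncard_le_ncard hAS).trans ((Set.ncard_union_le _ _).trans_eq (by simp))
    omega
  · have hcut : H.edgeBoundary A ⊆ S := fun e he =>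
      (hAS he).resolve_left fun h => huy (Set.mem_singleton_iff.mp h ▸ he)
    have := edgeConn_le_ncard_edgeBoundary (H := H) hA hAc
    have := Set.ncard_le_ncard hcut
    omega

end SimpleGraph

theorem Equiv.Perm.ncard_modEq_ncard_fixed {α : Type*} [Finite α] {q : ℕ} [Fact q.Prime]
    (σ : Equiv.Perm α) (hσ : σ ^ q = 1) {s : Set α} (hs : ∀ x, σ x ∈ s ↔ x ∈ s) :
    s.ncard ≡ {x ∈ s | σ x = x}.ncard [MOD q] := by
  classical
  have := Fintype.ofFinite α
  have key := card_compl_support_modEq (p := q) (n := 1) (σ := σ.subtypePerm hs)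
    (by ext; simp [hσ])
  have hfix : {x ∈ s | σ x = x} =
      Subtype.val '' ((((σ.subtypePerm hs).supportᶜ : Finset s)) : Set s) := by
    ext x
    simp only [Set.mem_ofPred, Finset.coe_compl, Set.mem_image, Set.mem_compl_iff,
      Finset.mem_coe, mem_support, not_not, Subtype.ext_iff, subtypePerm_apply]
    exact ⟨fun h => ⟨⟨x, h.1⟩, h.2, rfl⟩, fun ⟨y, hy, hyx⟩ => hyx ▸ ⟨y.2, hy⟩⟩
  rw [hfix, Set.ncard_image_of_injective _ Subtype.val_injective, Set.ncard_coe_finset,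
    ← Nat.card_coe_set_eq, Nat.card_eq_fintype_card]
  exact key.symm

section Group

variable {G : Type*} [Group G]

/-- Conjugation by an element `z` of order `q` fixes exactly the solutions commuting with `z`, and
right multiplication by `z` permutes those without fixed points. -/
theorem prime_dvd_ncard_pow_eq_one [Finite G] {q m : ℕ} (hq : q.Prime)
    (hqG : q ∣ Nat.card G) (hqm : q ∣ m) : q ∣ {x : G | x ^ m = 1}.ncard := by
  have := Fact.mk hq
  obtain ⟨z, hz⟩ := exists_prime_orderOf_dvd_card' q hqG
  have hzq : z ^ q = 1 := hz ▸ pow_orderOf_eq_one z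
  have hzm : z ^ m = 1 := orderOf_dvd_iff_pow_eq_one.mp (hz ▸ hqm)
  set conj := MulAut.toPerm G (MulAut.conj z)
  have conj_apply (x : G) : conj x = z * x * z⁻¹ := rfl
  have hconj := conj.ncard_modEq_ncard_fixed
    (by rw [← map_pow, ← map_pow, hzq, map_one, map_one]) (s := {x : G | x ^ m = 1})
    (fun x => by simp [conj_apply, conj_pow])
  have hfix : {x ∈ {x : G | x ^ m = 1} | conj x = x} = {x | x ^ m = 1 ∧ Commute z x} := by
    ext x
    simp [conj_apply, mul_inv_eq_iff_eq_mul, Commute, SemiconjBy]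
  have hcomm (x : G) : Commute z (x * z) ↔ Commute z x := by
    simp only [Commute, SemiconjBy, ← mul_assoc, mul_left_inj]
  have hmul := (Equiv.mulRight z).ncard_modEq_ncard_fixed
    (by rw [Equiv.pow_mulRight, hzq, Equiv.mulRight_one])
    (s := {x : G | x ^ m = 1 ∧ Commute z x})
    (fun x => by
      simp only [Set.mem_ofPred_eq, Equiv.coe_mulRight, hcomm]
      exact and_congr_left fun h => by rw [h.symm.mul_pow, hzm, mul_one])
  have hfree : {x ∈ {x : G | x ^ m = 1 ∧ Commute z x} | Equiv.mulRight z x = x} = ∅ := by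
    refine Set.eq_empty_of_forall_notMem fun x ⟨_, hx⟩ => ?_
    rw [Equiv.coe_mulRight, mul_eq_left] at hx
    rw [hx, orderOf_one] at hz
    exact hq.ne_one hz.symm
  rw [hfix] at hconj
  rw [hfree, Set.ncard_empty] at hmul
  exact Nat.modEq_zero_iff_dvd.mp (hconj.trans hmul)

lemma superpowerGraph_adj {x y : G} :
    (superpowerGraph G).Adj x y ↔ x ≠ y ∧ (orderOf x ∣ orderOf y ∨ orderOf y ∣ orderOf x) := by
  rw [superpowerGraph, SimpleGraph.fromRel_adj]

lemma superpowerGraph_adj_one {x : G} (hx : x ≠ 1) : (superpowerGraph G).Adj 1 x :=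
  superpowerGraph_adj.mpr ⟨hx.symm, .inl (by simp)⟩

variable [Finite G]

lemma gDeg_superpowerGraph_of_orderOf_eq_prime {p : ℕ} (hp : p.Prime) {x : G}
    (hx : orderOf x = p) : gDeg (superpowerGraph G) x = {h : G | p ∣ orderOf h}.ncard := by
  have hnbr : (superpowerGraph G).neighborSet x = insert 1 ({h : G | p ∣ orderOf h} \ {x}) := by
    ext h
    simp only [SimpleGraph.mem_neighborSet, superpowerGraph_adj, hx, Nat.dvd_prime hp,
      orderOf_eq_one_iff, Set.mem_insert_iff, Set.mem_sdiff, Set.mem_ofPred_eq,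
      Set.mem_singleton_iff]
    constructor
    · rintro ⟨hxh, hd | rfl | hd⟩
      exacts [.inr ⟨hd, hxh.symm⟩, .inl rfl, .inr ⟨hd ▸ dvd_rfl, hxh.symm⟩]
    · rintro (rfl | ⟨hd, hhx⟩)
      · exact ⟨fun hx1 => hp.ne_one (by rw [← hx, hx1, orderOf_one]), .inr (.inl rfl)⟩
      · exact ⟨Ne.symm hhx, .inl hd⟩
  rw [gDeg, hnbr, Set.ncard_insert_of_notMem (by simp [hp.ne_one]),
    Set.ncard_sdiff_singleton_add_one (by simp [hx])]

lemma gDeg_superpowerGraph_add_one_of_maximal {g : G}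
    (hg : ∀ h : G, orderOf g ∣ orderOf h → orderOf h = orderOf g) :
    gDeg (superpowerGraph G) g + 1 = {h : G | h ^ orderOf g = 1}.ncard := by
  have hnbr : (superpowerGraph G).neighborSet g = {h : G | h ^ orderOf g = 1} \ {g} := by
    ext h
    rw [SimpleGraph.mem_neighborSet, superpowerGraph_adj,
      or_iff_right_of_imp fun hd => (hg h hd).dvd, orderOf_dvd_iff_pow_eq_one, ne_comm, and_comm]
    rfl
  have hg_mem : g ∈ {h : G | h ^ orderOf g = 1} := pow_orderOf_eq_one g
  rw [gDeg, hnbr, Set.ncard_sdiff_singleton_add_one hg_mem]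

lemma setOf_pow_ordCompl_eq_one {p : ℕ} (hp : p.Prime) :
    {h : G | h ^ ordCompl[p] (Nat.card G) = 1} = {h : G | p ∣ orderOf h}ᶜ := by
  ext h
  rw [Set.mem_ofPred_eq, ← orderOf_dvd_iff_pow_eq_one, Set.mem_compl_iff, Set.mem_ofPred_eq]
  exact ⟨fun hd hpd => Nat.not_dvd_ordCompl hp Nat.card_pos.ne' (hpd.trans hd),
    Nat.dvd_ordCompl_of_dvd_not_dvd (orderOf_dvd_natCard h)⟩

lemma exists_dvd_orderOf_maximal {q : ℕ} (hq : q.Prime) (hqG : q ∣ Nat.card G) :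
    ∃ g : G, q ∣ orderOf g ∧ ∀ h : G, orderOf g ∣ orderOf h → orderOf h = orderOf g := by
  have := Fact.mk hq
  obtain ⟨x, hx⟩ := exists_prime_orderOf_dvd_card' q hqG
  obtain ⟨g, hqg, hmax⟩ := Set.exists_max_image {g : G | q ∣ orderOf g} orderOf
    (Set.toFinite _) ⟨x, hx.symm.dvd⟩
  exact ⟨g, hqg, fun h hgh =>
    (hmax h (dvd_trans hqg hgh)).antisymm (Nat.le_of_dvd (orderOf_pos h) hgh)⟩

lemma exists_primes_ne_dvd_card_of_not_isCyclic [IsSimpleGroup G] (hG : ¬ IsCyclic G) :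
    ∃ p q : ℕ, p.Prime ∧ q.Prime ∧ p ≠ q ∧ p ∣ Nat.card G ∧ q ∣ Nat.card G := by
  obtain ⟨p, hp, hpG⟩ := Nat.exists_prime_and_dvd (Finite.one_lt_card (α := G)).ne'
  by_contra! h
  have := Fact.mk hp
  -- a simple `p`-group is nilpotent, hence cyclic
  have hpgroup : IsPGroup p G := IsPGroup.of_card (Nat.eq_prime_pow_of_unique_prime_dvd
    Nat.card_pos.ne' fun hq hqG => by_contra fun hqp => h p _ hp hq (Ne.symm hqp) hpG hqG)
  have := hpgroup.isNilpotent
  exact hG inferInstance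

theorem exists_minDeg_lt_gDeg_superpowerGraph [IsSimpleGroup G] (hG : ¬ IsCyclic G) :
    ∃ y ≠ (1 : G), minDeg (superpowerGraph G) < gDeg (superpowerGraph G) y := by
  by_contra! hdeg
  set δ := minDeg (superpowerGraph G)
  have hδ {y : G} (hy : y ≠ 1) : gDeg (superpowerGraph G) y = δ :=
    (hdeg y hy).antisymm (Nat.sInf_le ⟨y, rfl⟩)
  obtain ⟨p, q, hp, hq, hpq, hpG, hqG⟩ := exists_primes_ne_dvd_card_of_not_isCyclic hG
  have := Fact.mk hp
  obtain ⟨x, hx⟩ := exists_prime_orderOf_dvd_card' p hpG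
  have hx1 : x ≠ 1 := by rintro rfl; exact hp.ne_one (hx.symm.trans orderOf_one)
  obtain ⟨g, hqg, hg⟩ := exists_dvd_orderOf_maximal hq hqG
  have hg1 : g ≠ 1 := by rintro rfl; exact hq.not_dvd_one (by rwa [orderOf_one] at hqg)
  have hqδ : q ∣ δ := by
    have hcompl := prime_dvd_ncard_pow_eq_one hq hqG
      (Nat.dvd_ordCompl_of_dvd_not_dvd hqG ((Nat.prime_dvd_prime_iff_eq hp hq).not.mpr hpq))
    rw [setOf_pow_ordCompl_eq_one hp] at hcompl
    have hcard := Set.ncard_add_ncard_compl {h : G | p ∣ orderOf h}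
    rw [← gDeg_superpowerGraph_of_orderOf_eq_prime hp hx, hδ hx1] at hcard
    exact (Nat.dvd_add_left hcompl).mp (hcard ▸ hqG)
  have hqδ1 : q ∣ δ + 1 := by
    rw [← hδ hg1, gDeg_superpowerGraph_add_one_of_maximal hg]
    exact prime_dvd_ncard_pow_eq_one hq hqG hqg
  exact hq.one_lt.ne' (Nat.dvd_one.mp ((Nat.dvd_add_right hqδ).mp hqδ1))

end Group

/-- If `G` is a finite non-cyclic simple group, then its order
superpower graph is not minimally edge connected. -/
theorem stmt_10 (G : Type*) [Group G] [Fintype G] [IsSimpleGroup G]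
    (hnc : ¬ IsCyclic G) :
    ¬ MinEdgeConnected (superpowerGraph G) := by
  obtain ⟨y, hy1, hy⟩ := exists_minDeg_lt_gDeg_superpowerGraph hnc
  exact SimpleGraph.not_minEdgeConnected_of_forall_adj (fun _ => superpowerGraph_adj_one) hy1 hy
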